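/- The Hamiltonian vector field of H1 for the map (P.v) gives the degenerate modified Volterra lattice on the middle coordinates: {w1, H1} = w1^2*(w2 - w0) and {w2, H1} = w2^2*(w3 - w1). -/

import Mathlib

noncomputable def D0 (F : ℝ → ℝ → ℝ → ℝ → ℝ) (w0 w1 w2 w3 : ℝ) : ℝ :=
  deriv (fun t => F t w1 w2 w3) w0
noncomputable def D1 (F : ℝ → ℝ → ℝ → ℝ → ℝ) (w0 w1 w2 w3 : ℝ) : ℝ :=
  deriv (fun t => F w0 t w2 w3) w1
noncomputable def D2 (F : ℝ → ℝ → ℝ → ℝ → ℝ) (w0 w1 w2 w3 : ℝ) : ℝ :=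
  deriv (fun t => F w0 w1 t w3) w2
noncomputable def D3 (F : ℝ → ℝ → ℝ → ℝ → ℝ) (w0 w1 w2 w3 : ℝ) : ℝ :=
  deriv (fun t => F w0 w1 w2 t) w3

noncomputable def pbV (nu : ℝ) (F G : ℝ → ℝ → ℝ → ℝ → ℝ) (w0 w1 w2 w3 : ℝ) : ℝ :=
  (1 / w1^2) * (D0 F w0 w1 w2 w3 * D2 G w0 w1 w2 w3 - D2 F w0 w1 w2 w3 * D0 G w0 w1 w2 w3)
  + (1 / w2^2) * (D1 F w0 w1 w2 w3 * D3 G w0 w1 w2 w3 - D3 F w0 w1 w2 w3 * D1 G w0 w1 w2 w3)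
  + (-(2*(w0*w1 + w1*w2 + w2*w3) + nu) / (w1^2 * w2^2)) * (D0 F w0 w1 w2 w3 * D3 G w0 w1 w2 w3 - D3 F w0 w1 w2 w3 * D0 G w0 w1 w2 w3)

noncomputable def H1v (a c nu w0 w1 w2 w3 : ℝ) : ℝ :=
  w3*w2^3*w1^2 + w2^2*w1^3*w0 - w3*w2^2*w1^2*w0 + w2^3*w1^3 + nu*w2^2*w1^2 + c*w2*w1 + a*(w2+w1)

/-! The only brackets of `w1` and `w2` with other coordinates are `{w1,w3} = 1/w2^2` and
`{w2,w0} = -1/w1^2`, so `{w1,H1} = ∂₃H1/w2^2` and `{w2,H1} = -∂₀H1/w1^2`. Since `H1` is affine in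
`w0` and in `w3`, with slopes `w1^2 w2^2 (w1 - w3)` and `w1^2 w2^2 (w2 - w0)`, both fields follow. -/

lemma deriv_affine (m b x : ℝ) : deriv (fun t => m * t + b) x = m :=
  (((hasDerivAt_id' x).const_mul m).add_const b).deriv.trans (mul_one m)

lemma D0_H1v (a c nu w0 w1 w2 w3 : ℝ) :
    D0 (H1v a c nu) w0 w1 w2 w3 = w1^2 * w2^2 * (w1 - w3) := by
  have affine : (fun t => H1v a c nu t w1 w2 w3) = fun t => w1^2 * w2^2 * (w1 - w3) * t +
      (w3*w2^3*w1^2 + w2^3*w1^3 + nu*w2^2*w1^2 + c*w2*w1 + a*(w2+w1)) := by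
    funext t; unfold H1v; ring
  rw [D0, affine, deriv_affine]

lemma D3_H1v (a c nu w0 w1 w2 w3 : ℝ) :
    D3 (H1v a c nu) w0 w1 w2 w3 = w1^2 * w2^2 * (w2 - w0) := by
  have affine : (fun t => H1v a c nu w0 w1 w2 t) = fun t => w1^2 * w2^2 * (w2 - w0) * t +
      (w2^2*w1^3*w0 + w2^3*w1^3 + nu*w2^2*w1^2 + c*w2*w1 + a*(w2+w1)) := by
    funext t; unfold H1v; ring
  rw [D3, affine, deriv_affine]

lemma pbV_w1_left (nu : ℝ) (G : ℝ → ℝ → ℝ → ℝ → ℝ) (w0 w1 w2 w3 : ℝ) :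
    pbV nu (fun _ x _ _ => x) G w0 w1 w2 w3 = D3 G w0 w1 w2 w3 / w2^2 := by
  simp [pbV, D0, D1, D2, D3, div_eq_inv_mul]

lemma pbV_w2_left (nu : ℝ) (G : ℝ → ℝ → ℝ → ℝ → ℝ) (w0 w1 w2 w3 : ℝ) :
    pbV nu (fun _ _ x _ => x) G w0 w1 w2 w3 = -D0 G w0 w1 w2 w3 / w1^2 := by
  simp [pbV, D0, D1, D2, D3, div_eq_inv_mul]

theorem stmt7 (a c nu w0 w1 w2 w3 : ℝ) (h : w1 * w2 ≠ 0) :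
    pbV nu (fun _ x _ _ => x) (H1v a c nu) w0 w1 w2 w3 = w1^2 * (w2 - w0) ∧
    pbV nu (fun _ _ x _ => x) (H1v a c nu) w0 w1 w2 w3 = w2^2 * (w3 - w1) := by
  obtain ⟨hw1, hw2⟩ := mul_ne_zero_iff.mp h
  rw [pbV_w1_left, pbV_w2_left, D3_H1v, D0_H1v]
  constructor <;> field_simp; ring
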